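/- Let D_+ = ⊕_{i=1}^r ℂd_i ⊗ O be the Lie algebra with basis d_i ⊗ t₀^{m₀} t^m (1 ≤ i ≤ r, m₀ ∈ ℤ, m ∈ ℤ^r) and bracket [d_i ⊗ t₀^{m₀} t^m, d_j ⊗ t₀^{n₀} t^n]₀ = n_i d_j ⊗ t₀^{m₀+n₀} t^{m+n} − m_j d_i ⊗ t₀^{m₀+n₀} t^{m+n} (the bracket of the derivations t_i ∂/∂t_i of O). Then the formulas (d_i ⊗ t₀^{m₀} t^m) · (K_j ⊗ t₀^{n₀} t^n) = n_i K_j ⊗ t₀^{m₀+n₀} t^{m+n} + δ_{i,j} Σ_{l=0}^r m_l K_l ⊗ t₀^{m₀+n₀} t^{m+n} give a well-defined action on the quotient K which makes K a representation of the Lie algebra D_+, i.e., [x, y]₀ · u = x · (y · u) − y · (x · u) for all x, y ∈ D_+ and u ∈ K. -/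

import Mathlib

/-- Exponents of monomials `t₀^{m₀} t^m = t₀^{m₀} t₁^{m₁} ⋯ t_r^{m_r}`. -/
abbrev TorIdx (r : ℕ) := ℤ × (Fin r → ℤ)

/-- The free module `⊕_{i=0}^r ℂK_i ⊗ O`, with basis `K_i ⊗ t₀^{m₀} t^m`
indexed by `(i, (m₀, m))`. -/
abbrev CF (r : ℕ) := (Fin (r + 1) × TorIdx r) →₀ ℂ

/-- The element `Σ_{l=0}^r c_l K_l ⊗ t₀^{e₀} t^e` where `(c_0, c_1, …, c_r) =
(m₀, m₁, …, m_r)`. -/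
noncomputable def consSum (r : ℕ) (m₀ : ℤ) (m : Fin r → ℤ) (e₀ : ℤ) (e : Fin r → ℤ) : CF r :=
  ∑ l : Fin (r + 1), Finsupp.single (l, (e₀, e)) (((Fin.cons m₀ m : Fin (r + 1) → ℤ) l : ℤ) : ℂ)

/-- The element `Σ_{i=0}^r m_i K_i ⊗ t₀^{m₀} t^m` spanning the relations. -/
noncomputable def relElem (r : ℕ) (m₀ : ℤ) (m : Fin r → ℤ) : CF r :=
  consSum r m₀ m m₀ m

/-- The subspace of relations, so that `K = CF r ⧸ RR r`. -/
noncomputable def RR (r : ℕ) : Submodule ℂ (CF r) :=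
  Submodule.span ℂ {x : CF r | ∃ (m₀ : ℤ) (m : Fin r → ℤ), x = relElem r m₀ m}

/-- The action of the derivation `d_i ⊗ t₀^{m₀} t^m` on the free module
`⊕_{j=0}^r ℂK_j ⊗ O`:
`K_j ⊗ t₀^{n₀} t^n ↦ n_i K_j ⊗ t₀^{m₀+n₀} t^{m+n}
  + δ_{i,j} Σ_{l=0}^r m_l K_l ⊗ t₀^{m₀+n₀} t^{m+n}`. -/
noncomputable def derK (r : ℕ) (m₀ : ℤ) (m : Fin r → ℤ) (i : Fin r) (u : CF r) : CF r :=
  u.sum fun jq c => c •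
    (Finsupp.single (jq.1, (m₀ + jq.2.1, m + jq.2.2)) ((jq.2.2 i : ℤ) : ℂ)
      + (if jq.1 = i.succ then consSum r m₀ m (m₀ + jq.2.1) (m + jq.2.2) else 0))

/-- The Lie algebra `D_+ = ⊕_{i=1}^r ℂ d_i ⊗ O`, with basis `d_i ⊗ t₀^{m₀} t^m`
indexed by `(i, (m₀, m))`. -/
abbrev DPlus (r : ℕ) := (Fin r × TorIdx r) →₀ ℂ

/-- The bracket of `D_+` (the bracket of the derivations `t_i ∂/∂t_i` of `O`):
`[d_i ⊗ t₀^{m₀}t^m, d_j ⊗ t₀^{n₀}t^n]₀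
  = n_i d_j ⊗ t₀^{m₀+n₀}t^{m+n} − m_j d_i ⊗ t₀^{m₀+n₀}t^{m+n}`. -/
noncomputable def brD (r : ℕ) (x y : DPlus r) : DPlus r :=
  x.sum fun p c => y.sum fun q c' => (c * c') •
    (((q.2.2 p.1 : ℤ) : ℂ) • Finsupp.single (q.1, (p.2.1 + q.2.1, p.2.2 + q.2.2)) (1 : ℂ)
      - ((p.2.2 q.1 : ℤ) : ℂ) • Finsupp.single (p.1, (p.2.1 + q.2.1, p.2.2 + q.2.2)) (1 : ℂ))

/-- The action of `D_+` on the free module `⊕_{j=0}^r ℂK_j ⊗ O`, extending the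
formulas `(d_i ⊗ t₀^{m₀}t^m) · (K_j ⊗ t₀^{n₀}t^n) = n_i K_j ⊗ t₀^{m₀+n₀}t^{m+n}
+ δ_{i,j} Σ_{l=0}^r m_l K_l ⊗ t₀^{m₀+n₀}t^{m+n}` bilinearly. -/
noncomputable def actD (r : ℕ) (d : DPlus r) (u : CF r) : CF r :=
  d.sum fun p c => c • derK r p.2.1 p.2.2 p.1 u

/-!
The operator of `d_i ⊗ t₀^{m₀}t^m` sends the relation `Σ_l n_l K_l ⊗ t₀^{n₀}t^n` to `n_i` times
the relation at the shifted exponent `(m₀ + n₀, m + n)`, so the relations are stable and the action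
descends to `K`. The representation identity is bilinear in the two elements of `D_+`, so it
suffices to check it on basis elements; there it is a direct computation, in which the
`Σ_l m_l K_l`-terms recombine because they depend additively on the coefficients `(m₀, m)`.
-/

section

variable {r : ℕ}

theorem consSum_add (a a' : ℤ) (b b' : Fin r → ℤ) (e₀ : ℤ) (e : Fin r → ℤ) :
    consSum r a b e₀ e + consSum r a' b' e₀ e = consSum r (a + a') (b + b') e₀ e := by
  simp only [consSum, ← Finset.sum_add_distrib, ← Finsupp.single_add, ← Int.cast_add]
  refine Finset.sum_congr rfl fun l _ => ?_
  refine Fin.cases ?_ (fun l => ?_) l <;> simp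

noncomputable def derKₗ (r : ℕ) (m₀ : ℤ) (m : Fin r → ℤ) (i : Fin r) : CF r →ₗ[ℂ] CF r :=
  Finsupp.lsum ℂ fun jq => LinearMap.toSpanSingleton ℂ (CF r)
    (Finsupp.single (jq.1, (m₀ + jq.2.1, m + jq.2.2)) ((jq.2.2 i : ℤ) : ℂ)
      + (if jq.1 = i.succ then consSum r m₀ m (m₀ + jq.2.1) (m + jq.2.2) else 0))

theorem derK_eq_derKₗ (m₀ : ℤ) (m : Fin r → ℤ) (i : Fin r) : derK r m₀ m i = derKₗ r m₀ m i :=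
  rfl

theorem derKₗ_single (m₀ : ℤ) (m : Fin r → ℤ) (i : Fin r) (k : Fin (r + 1)) (p₀ : ℤ)
    (p : Fin r → ℤ) (c : ℂ) :
    derKₗ r m₀ m i (Finsupp.single (k, (p₀, p)) c) =
      c • (((p i : ℤ) : ℂ) • Finsupp.single (k, (m₀ + p₀, m + p)) 1
        + (if k = i.succ then 1 else 0 : ℂ) • consSum r m₀ m (m₀ + p₀) (m + p)) := by
  rw [derKₗ, Finsupp.lsum_single, LinearMap.toSpanSingleton_apply, Finsupp.smul_single_one,
    ite_smul, one_smul, zero_smul]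

theorem derKₗ_consSum (m₀ : ℤ) (m : Fin r → ℤ) (i : Fin r) (a : ℤ) (b : Fin r → ℤ) (e₀ : ℤ)
    (e : Fin r → ℤ) :
    derKₗ r m₀ m i (consSum r a b e₀ e) =
      ((e i : ℤ) : ℂ) • consSum r a b (m₀ + e₀) (m + e)
        + ((b i : ℤ) : ℂ) • consSum r m₀ m (m₀ + e₀) (m + e) := by
  simp only [consSum, map_sum, derKₗ_single, smul_add, Finset.sum_add_distrib, smul_smul,
    Finset.smul_sum, Finsupp.smul_single_one]
  congr 1
  · exact Finset.sum_congr rfl fun l _ => by simp only [Finsupp.smul_single, smul_eq_mul, mul_comm]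
  · simp [Finset.sum_ite_eq']

theorem derKₗ_relElem (m₀ : ℤ) (m : Fin r → ℤ) (i : Fin r) (n₀ : ℤ) (n : Fin r → ℤ) :
    derKₗ r m₀ m i (relElem r n₀ n) = ((n i : ℤ) : ℂ) • relElem r (m₀ + n₀) (m + n) := by
  rw [relElem, derKₗ_consSum, ← smul_add, consSum_add, add_comm n₀, add_comm n, relElem]

theorem RR_le_comap_derKₗ (m₀ : ℤ) (m : Fin r → ℤ) (i : Fin r) :
    RR r ≤ (RR r).comap (derKₗ r m₀ m i) := by
  rw [RR, Submodule.span_le]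
  rintro _ ⟨n₀, n, rfl⟩
  rw [SetLike.mem_coe, Submodule.mem_comap, derKₗ_relElem]
  exact Submodule.smul_mem _ _ (Submodule.subset_span ⟨_, _, rfl⟩)

theorem derKₗ_commutator (m₀ n₀ : ℤ) (m n : Fin r → ℤ) (i j : Fin r) :
    derKₗ r m₀ m i * derKₗ r n₀ n j - derKₗ r n₀ n j * derKₗ r m₀ m i
      = ((n i : ℤ) : ℂ) • derKₗ r (m₀ + n₀) (m + n) j
        - ((m j : ℤ) : ℂ) • derKₗ r (m₀ + n₀) (m + n) i := by
  refine Finsupp.lhom_ext fun ⟨k, p₀, p⟩ c => ?_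
  have e₀ : m₀ + (n₀ + p₀) = m₀ + n₀ + p₀ := by ring
  have e₀' : n₀ + (m₀ + p₀) = m₀ + n₀ + p₀ := by ring
  have e : m + (n + p) = m + n + p := by ring
  have e' : n + (m + p) = m + n + p := by ring
  simp only [LinearMap.sub_apply, LinearMap.smul_apply, Module.End.mul_apply, derKₗ_single,
    map_add, map_smul, derKₗ_consSum, Pi.add_apply, Int.cast_add, e₀, e₀', e, e', ← consSum_add]
  module

noncomputable def actDₗ (r : ℕ) : DPlus r →ₗ[ℂ] Module.End ℂ (CF r) :=
  Finsupp.lsum ℂ fun p => LinearMap.toSpanSingleton ℂ _ (derKₗ r p.2.1 p.2.2 p.1)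

theorem actD_eq_actDₗ (d : DPlus r) (u : CF r) : actD r d u = actDₗ r d u := by
  simp [actD, actDₗ, derK_eq_derKₗ, Finsupp.lsum_apply, LinearMap.finsupp_sum_apply]

theorem actDₗ_single (i : Fin r) (m₀ : ℤ) (m : Fin r → ℤ) (c : ℂ) :
    actDₗ r (Finsupp.single (i, (m₀, m)) c) = c • derKₗ r m₀ m i := by
  rw [actDₗ, Finsupp.lsum_single, LinearMap.toSpanSingleton_apply]

theorem RR_le_comap_actDₗ (d : DPlus r) : RR r ≤ (RR r).comap (actDₗ r d) := by
  induction d using Finsupp.induction_linear with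
  | zero => simp
  | add d d' hd hd' =>
    intro u hu
    rw [Submodule.mem_comap, map_add, LinearMap.add_apply]
    exact add_mem (hd hu) (hd' hu)
  | single p c =>
    intro u hu
    rw [Submodule.mem_comap, actDₗ_single, LinearMap.smul_apply]
    exact Submodule.smul_mem _ c (RR_le_comap_derKₗ _ _ _ hu)

noncomputable def brDₗ (r : ℕ) : DPlus r →ₗ[ℂ] DPlus r →ₗ[ℂ] DPlus r :=
  Finsupp.lsum ℂ fun p => LinearMap.toSpanSingleton ℂ _ <| Finsupp.lsum ℂ fun q =>
    LinearMap.toSpanSingleton ℂ _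
      (((q.2.2 p.1 : ℤ) : ℂ) • Finsupp.single (q.1, (p.2.1 + q.2.1, p.2.2 + q.2.2)) (1 : ℂ)
        - ((p.2.2 q.1 : ℤ) : ℂ) • Finsupp.single (p.1, (p.2.1 + q.2.1, p.2.2 + q.2.2)) (1 : ℂ))

theorem brD_eq_brDₗ (x y : DPlus r) : brD r x y = brDₗ r x y := by
  simp only [brD, brDₗ, Finsupp.lsum_apply, LinearMap.finsupp_sum_apply,
    LinearMap.toSpanSingleton_apply, LinearMap.smul_apply, Finsupp.smul_sum, mul_smul]

theorem brDₗ_single_single (i j : Fin r) (m₀ n₀ : ℤ) (m n : Fin r → ℤ) (a b : ℂ) :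
    brDₗ r (Finsupp.single (i, (m₀, m)) a) (Finsupp.single (j, (n₀, n)) b)
      = (a * b) • (((n i : ℤ) : ℂ) • Finsupp.single (j, (m₀ + n₀, m + n)) (1 : ℂ)
        - ((m j : ℤ) : ℂ) • Finsupp.single (i, (m₀ + n₀, m + n)) (1 : ℂ)) := by
  simp only [brDₗ, Finsupp.lsum_single, LinearMap.toSpanSingleton_apply, LinearMap.smul_apply,
    smul_smul]

theorem actDₗ_brDₗ (x y : DPlus r) :
    actDₗ r (brDₗ r x y) = actDₗ r x * actDₗ r y - actDₗ r y * actDₗ r x := by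
  induction x using Finsupp.induction_linear with
  | zero => simp only [map_zero, LinearMap.zero_apply, zero_mul, mul_zero]; abel
  | add x x' hx hx' => simp only [map_add, LinearMap.add_apply, hx, hx', add_mul, mul_add]; abel
  | single p a =>
    induction y using Finsupp.induction_linear with
    | zero => simp only [map_zero, zero_mul, mul_zero]; abel
    | add y y' hy hy' => simp only [map_add, hy, hy', add_mul, mul_add]; abel
    | single q b =>
      obtain ⟨i, m₀, m⟩ := p
      obtain ⟨j, n₀, n⟩ := q
      simp only [brDₗ_single_single, map_smul, map_sub, actDₗ_single, one_smul,
        smul_mul_smul_comm, mul_comm b a, ← derKₗ_commutator]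
      module

end

theorem K_is_DPlus_representation_general (r : ℕ) :
    (∀ (d : DPlus r) (u : CF r), u ∈ RR r → actD r d u ∈ RR r) ∧
    ∃ act : DPlus r → (CF r ⧸ RR r) → (CF r ⧸ RR r),
      (∀ (d : DPlus r) (u : CF r), act d ((RR r).mkQ u) = (RR r).mkQ (actD r d u)) ∧
      (∀ (x y : DPlus r) (u : CF r ⧸ RR r),
        act (brD r x y) u = act x (act y u) - act y (act x u)) := by
  refine ⟨fun d u hu => actD_eq_actDₗ d u ▸ RR_le_comap_actDₗ d hu,
    fun d => (RR r).mapQ (RR r) (actDₗ r d) (RR_le_comap_actDₗ d), fun d u => ?_, fun x y u => ?_⟩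
  · simp only [Submodule.mkQ_apply, Submodule.mapQ_apply, actD_eq_actDₗ]
  · obtain ⟨v, rfl⟩ := Submodule.mkQ_surjective _ u
    simp only [Submodule.mkQ_apply, Submodule.mapQ_apply, brD_eq_brDₗ, actDₗ_brDₗ,
      LinearMap.sub_apply, Module.End.mul_apply, Submodule.Quotient.mk_sub]

/-- the action of `D_+` on `⊕ ℂK_i ⊗ O` descends to a well-defined
action on the quotient `K`, which makes `K` a representation of the Lie algebra
`D_+`. -/
theorem K_is_DPlus_representation (r : ℕ) (hr : 1 ≤ r) :
    (∀ (d : DPlus r) (u : CF r), u ∈ RR r → actD r d u ∈ RR r) ∧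
    ∃ act : DPlus r → (CF r ⧸ RR r) → (CF r ⧸ RR r),
      (∀ (d : DPlus r) (u : CF r), act d ((RR r).mkQ u) = (RR r).mkQ (actD r d u)) ∧
      (∀ (x y : DPlus r) (u : CF r ⧸ RR r),
        act (brD r x y) u = act x (act y u) - act y (act x u)) :=
  K_is_DPlus_representation_general r
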